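/- For a standard one-dimensional Brownian motion $B_t$ started at 0 and a level $y > 0$, the hitting time $T_y = \inf\{t \geq 0 : B_t = y\}$ satisfies $P(T_y \leq t) = 2\Phi(-y/\sqrt{t})$ for all $t > 0$, where $\Phi$ is the standard normal CDF. -/

import Mathlib

noncomputable section
open MeasureTheory ProbabilityTheory Real Filter

/-- The standard normal cumulative distribution function. -/
def stdNormalCDF (x : ℝ) : ℝ :=
  ∫ t in Set.Iic x, (1 / Real.sqrt (2 * Real.pi)) * Real.exp (-t ^ 2 / 2)

/-- `B` is a standard one-dimensional Brownian motion under `P`, started at `0`. -/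
def IsStdBM {Ω : Type*} [MeasurableSpace Ω] (P : Measure Ω) (B : ℝ → Ω → ℝ) : Prop :=
  IsProbabilityMeasure P ∧
  (∀ t, Measurable (B t)) ∧
  (∀ ω, B 0 ω = 0) ∧
  (∀ ω, Continuous fun t => B t ω) ∧
  (∀ s t : ℝ, 0 ≤ s → s ≤ t →
    P.map (fun ω => B t ω - B s ω) = gaussianReal 0 (Real.toNNReal (t - s))) ∧
  (∀ (n : ℕ) (t : ℕ → ℝ), StrictMono t → 0 ≤ t 0 →
    iIndepFun
      (fun i : Fin n => fun ω => B (t (i + 1)) ω - B (t i) ω) P)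

/-- First hitting time of level `y` by the path `t ↦ B t ω`. -/
def hitTime {Ω : Type*} (B : ℝ → Ω → ℝ) (y : ℝ) (ω : Ω) : ℝ :=
  sInf {t : ℝ | 0 ≤ t ∧ B t ω = y}

/-!
Reflection principle through random walks. Sample the path at the grid points `k t / N`. For a
walk with independent increments and symmetric tails `S n - S k`, reflecting the walk after its
first passage above `z` gives `P (max_{k ≤ n} S k > z) ≤ 2 P (S n > z)`. Conversely
`P (S n > z) + P (S n > z + 2δ)` is at most `P (max_{k ≤ n} S k > z)` plus the probability that
the walk overshoots `z` by more than `δ` at its first passage, which the Gaussian tail bound makes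
at most `N exp (-δ² N / 2t)`. As the mesh goes to `0` the grid maxima of a continuous path
converge to its supremum over `[0, t]`, so `P (sup_{[0, t]} B > z)` lies between `2 P (B t > w)`
for every `w > z` and `2 P (B t > z)`. The level `y` is reached by time `t` if the supremum
exceeds `y`, and only if it exceeds every `z < y` or the path never reaches `y`; the latter event
is null since `P (sup_{[0, u]} B > y) → 1` as `u → ∞`.
-/

open Set
open scoped ENNReal NNReal Topology

section StdNormal

lemma stdNormalCDF_eq_integral (x : ℝ) :
    stdNormalCDF x = ∫ t in Iic x, gaussianPDFReal 0 1 t := by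
  simp [stdNormalCDF, gaussianPDFReal]

lemma ofReal_stdNormalCDF (x : ℝ) :
    ENNReal.ofReal (stdNormalCDF x) = gaussianReal 0 1 (Iic x) := by
  rw [gaussianReal_apply_eq_integral _ one_ne_zero, stdNormalCDF_eq_integral]

@[fun_prop]
lemma continuous_stdNormalCDF : Continuous stdNormalCDF := by
  have hint (x : ℝ) : IntegrableOn (gaussianPDFReal 0 1) (Iic x) :=
    (integrable_gaussianPDFReal 0 1).integrableOn
  have h : stdNormalCDF =
      fun x => stdNormalCDF 0 + ∫ t in (0 : ℝ)..x, gaussianPDFReal 0 1 t := by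
    ext x
    rw [stdNormalCDF_eq_integral, stdNormalCDF_eq_integral,
      ← intervalIntegral.integral_Iic_sub_Iic (hint 0) (hint x), add_sub_cancel]
  rw [h]
  exact continuous_const.add <| intervalIntegral.continuous_primitive
    (fun _ _ => (integrable_gaussianPDFReal 0 1).intervalIntegrable) 0

lemma stdNormalCDF_zero : stdNormalCDF 0 = 1 / 2 := by
  have hsymm : ∫ t in Iic (0 : ℝ), gaussianPDFReal 0 1 t
      = ∫ t in Ioi (0 : ℝ), gaussianPDFReal 0 1 t := by
    rw [← neg_zero, ← integral_comp_neg_Ioi, neg_zero]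
    simp [gaussianPDFReal]
  have htotal := intervalIntegral.integral_Iic_add_Ioi (b := 0)
    (integrable_gaussianPDFReal 0 1).integrableOn (integrable_gaussianPDFReal 0 1).integrableOn
  rw [integral_gaussianPDFReal_eq_one 0 one_ne_zero, ← hsymm] at htotal
  rw [stdNormalCDF_eq_integral]
  linarith

lemma gaussianReal_map_neg_zero (v : ℝ≥0) :
    (gaussianReal 0 v).map (fun x => -x) = gaussianReal 0 v := by
  simpa using gaussianReal_map_neg (μ := 0) (v := v)

lemma gaussianReal_map_sqrt_mul {v : ℝ} (hv : 0 ≤ v) :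
    (gaussianReal 0 1).map (√v * ·) = gaussianReal 0 v.toNNReal := by
  rw [gaussianReal_map_const_mul, mul_zero, mul_one]
  congr 1
  ext
  simp [Real.sq_sqrt hv, hv]

lemma gaussianReal_Ioi {v : ℝ} (hv : 0 < v) (x : ℝ) :
    gaussianReal 0 v.toNNReal (Ioi x) = ENNReal.ofReal (stdNormalCDF (-x / √v)) := by
  have := nullSingletonClass_gaussianReal (μ := 0) (one_ne_zero (α := ℝ≥0))
  have hsv : 0 < √v := Real.sqrt_pos.mpr hv
  rw [ofReal_stdNormalCDF, ← measure_congr Iio_ae_eq_Iic, ← gaussianReal_map_neg_zero,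
    Measure.map_apply measurable_neg measurableSet_Ioi, ← gaussianReal_map_sqrt_mul hv.le,
    Measure.map_apply (by fun_prop) (measurableSet_Ioi.preimage measurable_neg)]
  congr 1
  ext t
  simp [lt_div_iff₀ hsv, mul_comm]

lemma hasSubgaussianMGF_id_gaussianReal (v : ℝ≥0) :
    HasSubgaussianMGF id v (gaussianReal 0 v) where
  integrable_exp_mul := integrable_exp_mul_gaussianReal
  mgf_le t := by simp [mgf_id_gaussianReal]

end StdNormal

section RandomWalk

variable {Ω : Type*} {S : ℕ → Ω → ℝ} {n j k : ℕ} {z : ℝ}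

-- Indexed through `Fin n`, so that the independence of the first `n` increments applies.
abbrev incrementsIn (S : ℕ → Ω → ℝ) (n : ℕ) (I : Set ℕ) : MeasurableSpace Ω :=
  ⨆ i ∈ {i : Fin n | (i : ℕ) ∈ I},
    MeasurableSpace.comap (fun ω => S (i + 1) ω - S i ω) inferInstance

lemma measurable_sum_incrementsIn {I : Set ℕ} {s : Finset ℕ} (hsI : ∀ i ∈ s, i ∈ I)
    (hsn : ∀ i ∈ s, i < n) :
    Measurable[incrementsIn S n I] fun ω => ∑ i ∈ s, (S (i + 1) ω - S i ω) := by
  refine Finset.measurable_fun_sum s fun i hi => ?_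
  exact (comap_measurable _).mono
    (le_iSup₂_of_le (f := fun (i : Fin n) (_ : (i : ℕ) ∈ I) =>
      MeasurableSpace.comap (fun ω => S (i + 1) ω - S i ω) inferInstance)
      ⟨i, hsn i hi⟩ (hsI i hi) le_rfl) le_rfl

lemma measurable_incrementsIn_Iio (hS0 : ∀ ω, S 0 ω = 0) (hjk : j ≤ k) (hkn : k ≤ n) :
    Measurable[incrementsIn S n (Iio k)] (S j) := by
  have hS : S j = fun ω => ∑ i ∈ Finset.range j, (S (i + 1) ω - S i ω) := by
    ext ω
    rw [Finset.sum_range_sub (S · ω), hS0, sub_zero]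
  rw [hS]
  exact measurable_sum_incrementsIn (fun i hi => (Finset.mem_range.mp hi).trans_le hjk)
    (fun i hi => ((Finset.mem_range.mp hi).trans_le hjk).trans_le hkn)

lemma measurable_incrementsIn_Ici (hkn : k ≤ n) :
    Measurable[incrementsIn S n (Ici k)] fun ω => S n ω - S k ω := by
  have hS : (fun ω => S n ω - S k ω)
      = fun ω => ∑ i ∈ Finset.Ico k n, (S (i + 1) ω - S i ω) := by
    ext ω
    rw [Finset.sum_Ico_sub (S · ω) hkn]
  rw [hS]
  exact measurable_sum_incrementsIn (fun i hi => (Finset.mem_Ico.mp hi).1)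
    (fun i hi => (Finset.mem_Ico.mp hi).2)

def firstPassage (S : ℕ → Ω → ℝ) (z : ℝ) (k : ℕ) : Set Ω :=
  {ω | (∀ j < k, S j ω ≤ z) ∧ z < S k ω}

lemma disjoint_firstPassage (hjk : j ≠ k) :
    Disjoint (firstPassage S z j) (firstPassage S z k) := by
  wlog h : j < k generalizing j k
  · exact (this hjk.symm (by omega)).symm
  exact disjoint_left.mpr fun ω hj hk => (hk.1 j h).not_gt hj.2

lemma setOf_exists_lt_eq_biUnion_firstPassage (hS0 : ∀ ω, S 0 ω = 0) (hz : 0 ≤ z) (n : ℕ) :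
    {ω | ∃ k ≤ n, z < S k ω} = ⋃ k ∈ Finset.range n, firstPassage S z (k + 1) := by
  classical
  ext ω
  simp only [mem_ofPred_eq, mem_iUnion, Finset.mem_range, exists_prop]
  constructor
  · rintro ⟨k, hkn, hk⟩
    have hex : ∃ m, z < S m ω := ⟨k, hk⟩
    obtain ⟨j, hj⟩ : ∃ j, Nat.find hex = j + 1 := Nat.exists_eq_succ_of_ne_zero fun h0 => by
      have := Nat.find_spec hex
      rw [h0, hS0] at this
      linarith
    refine ⟨j, by have := Nat.find_min' hex hk; omega, fun i hi => ?_, hj ▸ Nat.find_spec hex⟩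
    exact not_lt.mp (Nat.find_min hex (hj ▸ hi))
  · rintro ⟨k, hkn, -, hk⟩
    exact ⟨k + 1, hkn, hk⟩

lemma measurableSet_firstPassage (hS0 : ∀ ω, S 0 ω = 0) (hkn : k ≤ n) :
    MeasurableSet[incrementsIn S n (Iio k)] (firstPassage S z k) := by
  simp only [firstPassage, ofPred_and, ofPred_forall]
  exact .inter (.iInter fun j => .iInter fun hj => measurableSet_le
      (measurable_incrementsIn_Iio hS0 hj.le hkn) measurable_const)
    (measurableSet_lt measurable_const (measurable_incrementsIn_Iio hS0 le_rfl hkn))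

variable [MeasurableSpace Ω] {P : Measure Ω}

lemma incrementsIn_le (hS : ∀ k, Measurable (S k)) (I : Set ℕ) :
    incrementsIn S n I ≤ ‹MeasurableSpace Ω› :=
  iSup₂_le fun _ _ => ((hS _).sub (hS _)).comap_le

lemma measure_inter_eq_sum_firstPassage (hS : ∀ k, Measurable (S k)) (hS0 : ∀ ω, S 0 ω = 0)
    (hz : 0 ≤ z) {F : Set Ω} (hF : MeasurableSet F) :
    P ({ω | ∃ k ≤ n, z < S k ω} ∩ F)
      = ∑ k ∈ Finset.range n, P (firstPassage S z (k + 1) ∩ F) := by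
  rw [setOf_exists_lt_eq_biUnion_firstPassage hS0 hz, iUnion₂_inter]
  refine measure_biUnion_finset (fun i _ j _ hij =>
    (disjoint_firstPassage (by omega)).mono inter_subset_left inter_subset_left) fun k hk => ?_
  exact (incrementsIn_le hS _ _ (measurableSet_firstPassage hS0 (Finset.mem_range.mp hk))).inter hF

lemma indep_incrementsIn (hS : ∀ k, Measurable (S k))
    (hind : iIndepFun (fun i : Fin n => fun ω => S (i + 1) ω - S i ω) P)
    {I J : Set ℕ} (hIJ : Disjoint I J) :
    Indep (incrementsIn S n I) (incrementsIn S n J) P :=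
  indep_iSup_of_disjoint (fun _ => ((hS _).sub (hS _)).comap_le) hind.iIndep
    (hIJ.preimage _)

structure IsSymmetricWalk (S : ℕ → Ω → ℝ) (n : ℕ) (P : Measure Ω) : Prop where
  measurable : ∀ k, Measurable (S k)
  zero : ∀ ω, S 0 ω = 0
  iIndepFun_increments : iIndepFun (fun i : Fin n => fun ω => S (i + 1) ω - S i ω) P
  map_neg_sub : ∀ k ≤ n,
    P.map (fun ω => -(S n ω - S k ω)) = P.map (fun ω => S n ω - S k ω)

lemma measure_eq_inter_lt_add_inter_le {X : Ω → ℝ} (hX : Measurable X) (A : Set Ω) (z : ℝ) :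
    P A = P (A ∩ {ω | z < X ω}) + P (A ∩ {ω | X ω ≤ z}) := by
  rw [← measure_inter_add_sdiff A (measurableSet_lt measurable_const hX)]
  congr 2
  ext
  simp

namespace IsSymmetricWalk

variable (hW : IsSymmetricWalk S n P)
include hW

lemma measure_inter_sub_mem (hkn : k ≤ n) {A : Set Ω}
    (hA : MeasurableSet[incrementsIn S n (Iio k)] A) {s : Set ℝ} (hs : MeasurableSet s) :
    P (A ∩ {ω | S n ω - S k ω ∈ s}) = P A * P {ω | S n ω - S k ω ∈ s} :=
  (Indep_iff _ _ P).mp (indep_incrementsIn hW.measurable hW.iIndepFun_increments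
    (Iio_disjoint_Ici le_rfl)) A _ hA (measurable_incrementsIn_Ici hkn hs)

lemma measure_inter_sub_le_neg (hkn : k ≤ n) {A : Set Ω}
    (hA : MeasurableSet[incrementsIn S n (Iio k)] A) (a : ℝ) :
    P (A ∩ {ω | S n ω - S k ω ≤ -a}) = P (A ∩ {ω | a ≤ S n ω - S k ω}) := by
  have hX : Measurable fun ω => S n ω - S k ω := (hW.measurable n).sub (hW.measurable k)
  have hsymm : P {ω | S n ω - S k ω ≤ -a} = P {ω | a ≤ S n ω - S k ω} :=
    calc P {ω | S n ω - S k ω ≤ -a}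
        = P.map (fun ω => S n ω - S k ω) (Iic (-a)) :=
          (Measure.map_apply hX measurableSet_Iic).symm
      _ = P.map (fun ω => -(S n ω - S k ω)) (Iic (-a)) := by rw [hW.map_neg_sub k hkn]
      _ = P {ω | a ≤ S n ω - S k ω} := by
        rw [Measure.map_apply (f := fun ω => -(S n ω - S k ω)) hX.neg measurableSet_Iic]
        simp only [preimage, mem_Iic, neg_le_neg_iff]
  calc P (A ∩ {ω | S n ω - S k ω ≤ -a})
      = P A * P {ω | S n ω - S k ω ≤ -a} := hW.measure_inter_sub_mem hkn hA measurableSet_Iic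
    _ = P A * P {ω | a ≤ S n ω - S k ω} := by rw [hsymm]
    _ = P (A ∩ {ω | a ≤ S n ω - S k ω}) :=
        (hW.measure_inter_sub_mem hkn hA measurableSet_Ici).symm

lemma measure_firstPassage_inter_le_le (hkn : k ≤ n) :
    P (firstPassage S z k ∩ {ω | S n ω ≤ z})
      ≤ P (firstPassage S z k ∩ {ω | z < S n ω}) :=
  calc P (firstPassage S z k ∩ {ω | S n ω ≤ z})
      ≤ P (firstPassage S z k ∩ {ω | S n ω - S k ω ≤ -0}) :=
        measure_mono fun ω ⟨hω, (h : S n ω ≤ z)⟩ =>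
          ⟨hω, show S n ω - S k ω ≤ -0 by linarith [hω.2]⟩
    _ = P (firstPassage S z k ∩ {ω | 0 ≤ S n ω - S k ω}) :=
        hW.measure_inter_sub_le_neg hkn (measurableSet_firstPassage hW.zero hkn) 0
    _ ≤ P (firstPassage S z k ∩ {ω | z < S n ω}) :=
        measure_mono fun ω ⟨hω, (h : 0 ≤ S n ω - S k ω)⟩ =>
          ⟨hω, show z < S n ω by linarith [hω.2]⟩

lemma measure_firstPassage_inter_lt_le (hkn : k + 1 ≤ n) (δ : ℝ) :
    P (firstPassage S z (k + 1) ∩ {ω | z + 2 * δ < S n ω})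
      ≤ P (firstPassage S z (k + 1) ∩ {ω | S n ω ≤ z})
        + P {ω | δ < S (k + 1) ω - S k ω} := by
  set A := firstPassage S z (k + 1)
  set A' := A ∩ {ω | S (k + 1) ω ≤ z + δ}
  have hA' : MeasurableSet[incrementsIn S n (Iio (k + 1))] A' :=
    (measurableSet_firstPassage hW.zero hkn).inter
      (measurableSet_le (measurable_incrementsIn_Iio hW.zero le_rfl hkn) measurable_const)
  have hnear : P (A' ∩ {ω | z + 2 * δ < S n ω}) ≤ P (A ∩ {ω | S n ω ≤ z}) :=
    calc P (A' ∩ {ω | z + 2 * δ < S n ω})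
        ≤ P (A' ∩ {ω | δ ≤ S n ω - S (k + 1) ω}) :=
          measure_mono fun ω ⟨hω, (h : z + 2 * δ < S n ω)⟩ =>
            ⟨hω, show δ ≤ _ by linarith [hω.2.out]⟩
      _ = P (A' ∩ {ω | S n ω - S (k + 1) ω ≤ -δ}) :=
          (hW.measure_inter_sub_le_neg hkn hA' δ).symm
      _ ≤ P (A ∩ {ω | S n ω ≤ z}) :=
          measure_mono fun ω ⟨hω, (h : S n ω - S (k + 1) ω ≤ -δ)⟩ =>
            ⟨hω.1, show _ ≤ z by linarith [hω.2.out]⟩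
  have hsplit : A ∩ {ω | z + 2 * δ < S n ω}
      ⊆ (A' ∩ {ω | z + 2 * δ < S n ω}) ∪ {ω | δ < S (k + 1) ω - S k ω} := by
    rintro ω ⟨hω, h⟩
    by_cases hnear : S (k + 1) ω ≤ z + δ
    · exact .inl ⟨⟨hω, hnear⟩, h⟩
    · exact .inr (show δ < _ by linarith [hω.1 k k.lt_succ_self])
  calc P (A ∩ {ω | z + 2 * δ < S n ω})
      ≤ P (A' ∩ {ω | z + 2 * δ < S n ω}) + P {ω | δ < S (k + 1) ω - S k ω} :=
        (measure_mono hsplit).trans (measure_union_le _ _)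
    _ ≤ _ := by gcongr

theorem measure_exists_lt_le (hz : 0 ≤ z) :
    P {ω | ∃ k ≤ n, z < S k ω} ≤ 2 * P {ω | z < S n ω} := by
  set E := {ω | z < S n ω}
  have hE : MeasurableSet E := measurableSet_lt measurable_const (hW.measurable n)
  have hsum {F : Set Ω} (hF : MeasurableSet F) :=
    measure_inter_eq_sum_firstPassage (P := P) (n := n) hW.measurable hW.zero hz hF
  calc P {ω | ∃ k ≤ n, z < S k ω}
      = ∑ k ∈ Finset.range n, P (firstPassage S z (k + 1)) := by
        simpa using hsum MeasurableSet.univ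
    _ ≤ ∑ k ∈ Finset.range n, 2 * P (firstPassage S z (k + 1) ∩ E) := by
        gcongr with k hk
        rw [measure_eq_inter_lt_add_inter_le (hW.measurable n) _ z, two_mul]
        exact add_le_add_right (hW.measure_firstPassage_inter_le_le (Finset.mem_range.mp hk)) _
    _ = 2 * P ({ω | ∃ k ≤ n, z < S k ω} ∩ E) := by rw [← Finset.mul_sum, hsum hE]
    _ ≤ 2 * P E := by gcongr; exact inter_subset_right

theorem measure_lt_add_measure_lt_le (hz : 0 ≤ z) {δ : ℝ} (hδ : 0 ≤ δ) :
    P {ω | z < S n ω} + P {ω | z + 2 * δ < S n ω}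
      ≤ P {ω | ∃ k ≤ n, z < S k ω}
        + ∑ k ∈ Finset.range n, P {ω | δ < S (k + 1) ω - S k ω} := by
  have hsum {F : Set Ω} (hF : MeasurableSet F) (hFU : F ⊆ {ω | ∃ k ≤ n, z < S k ω}) :
      P F = ∑ k ∈ Finset.range n, P (firstPassage S z (k + 1) ∩ F) := by
    rw [← measure_inter_eq_sum_firstPassage hW.measurable hW.zero hz hF, inter_eq_right.mpr hFU]
  have hE (w : ℝ) : MeasurableSet {ω | w < S n ω} :=
    measurableSet_lt measurable_const (hW.measurable n)
  have hEU {w : ℝ} (hw : z ≤ w) : {ω | w < S n ω} ⊆ {ω | ∃ k ≤ n, z < S k ω} :=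
    fun ω (h : w < S n ω) => ⟨n, le_rfl, by linarith⟩
  calc P {ω | z < S n ω} + P {ω | z + 2 * δ < S n ω}
      = ∑ k ∈ Finset.range n, P (firstPassage S z (k + 1) ∩ {ω | z < S n ω})
        + ∑ k ∈ Finset.range n,
            P (firstPassage S z (k + 1) ∩ {ω | z + 2 * δ < S n ω}) := by
        rw [hsum (hE _) (hEU le_rfl), hsum (hE _) (hEU (by linarith))]
    _ ≤ ∑ k ∈ Finset.range n, P (firstPassage S z (k + 1) ∩ {ω | z < S n ω})
        + ∑ k ∈ Finset.range n, (P (firstPassage S z (k + 1) ∩ {ω | S n ω ≤ z})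
          + P {ω | δ < S (k + 1) ω - S k ω}) := by
        gcongr with k hk
        exact hW.measure_firstPassage_inter_lt_le (Finset.mem_range.mp hk) δ
    _ = ∑ k ∈ Finset.range n, P (firstPassage S z (k + 1))
        + ∑ k ∈ Finset.range n, P {ω | δ < S (k + 1) ω - S k ω} := by
        rw [Finset.sum_add_distrib, ← add_assoc, ← Finset.sum_add_distrib]
        congr 1
        exact Finset.sum_congr rfl fun k _ =>
          (measure_eq_inter_lt_add_inter_le (hW.measurable n) _ z).symm
    _ = P {ω | ∃ k ≤ n, z < S k ω}
        + ∑ k ∈ Finset.range n, P {ω | δ < S (k + 1) ω - S k ω} := by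
        simpa using congrArg (· + _) (measure_inter_eq_sum_firstPassage (P := P) hW.measurable
          hW.zero hz MeasurableSet.univ).symm

end IsSymmetricWalk

end RandomWalk

section BrownianMotion

lemma natCast_mul_div_mem_Icc {k N : ℕ} (hkN : k ≤ N) {t : ℝ} (ht : 0 ≤ t) :
    (k : ℝ) * (t / N) ∈ Icc 0 t := by
  refine ⟨by positivity, ?_⟩
  rcases eq_or_ne N 0 with rfl | hN
  · simpa using ht
  calc (k : ℝ) * (t / N) ≤ N * (t / N) := by gcongr
    _ = t := by field_simp

lemma exists_Icc_lt_iff_exists_dyadic {f : ℝ → ℝ} (hf : Continuous f) {t z : ℝ}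
    (ht : 0 < t) :
    (∃ s ∈ Icc 0 t, z < f s) ↔ ∃ m k : ℕ, k ≤ 2 ^ m ∧ z < f (k * (t / (2 ^ m : ℕ))) := by
  constructor
  · rintro ⟨s, ⟨hs0, hst⟩, hz⟩
    set g : ℕ → ℝ := fun m => ⌊s * 2 ^ m / t⌋₊ * (t / 2 ^ m)
    have hmesh : Tendsto (fun m : ℕ => t / 2 ^ m) atTop (𝓝 0) := by
      simpa [div_eq_mul_inv] using
        (tendsto_pow_atTop_nhds_zero_of_lt_one (by norm_num : (0 : ℝ) ≤ 2⁻¹)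
          (by norm_num)).const_mul t
    have hg : Tendsto g atTop (𝓝 s) := by
      refine tendsto_of_tendsto_of_tendsto_of_le_of_le (by simpa using tendsto_const_nhds.sub hmesh)
        tendsto_const_nhds (fun m => ?_) (fun m => ?_)
      · have := Nat.sub_one_lt_floor (s * 2 ^ m / t)
        have h2 : (0 : ℝ) < t / 2 ^ m := by positivity
        calc s - t / 2 ^ m = (s * 2 ^ m / t - 1) * (t / 2 ^ m) := by field_simp
          _ ≤ g m := mul_le_mul_of_nonneg_right this.le h2.le
      · calc g m ≤ s * 2 ^ m / t * (t / 2 ^ m) :=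
            mul_le_mul_of_nonneg_right (Nat.floor_le (by positivity)) (by positivity)
          _ = s := by field_simp
    obtain ⟨m, hm⟩ := ((hf.tendsto s).comp hg).eventually (eventually_gt_nhds hz) |>.exists
    refine ⟨m, ⌊s * 2 ^ m / t⌋₊, Nat.floor_le_of_le (R := ℝ) ?_, by simpa [g] using hm⟩
    calc s * 2 ^ m / t ≤ t * 2 ^ m / t := by gcongr
      _ = _ := by push_cast; field_simp
  · rintro ⟨m, k, hk, hz⟩
    exact ⟨_, natCast_mul_div_mem_Icc hk ht.le, hz⟩

variable {Ω : Type*} {B : ℝ → Ω → ℝ} {s t z : ℝ}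

lemma monotone_setOf_exists_dyadic :
    Monotone fun m : ℕ => {ω | ∃ k : ℕ, k ≤ 2 ^ m ∧ z < B (k * (t / (2 ^ m : ℕ))) ω} := by
  refine monotone_nat_of_le_succ fun m ω ⟨k, hk, hz⟩ =>
    ⟨2 * k, by rw [pow_succ]; omega, ?_⟩
  have hgrid : ((2 * k : ℕ) : ℝ) * (t / (2 ^ (m + 1) : ℕ)) = k * (t / (2 ^ m : ℕ)) := by
    push_cast
    field_simp
    ring
  rwa [hgrid]

lemma setOf_exists_Icc_lt_eq_iUnion (hB : ∀ ω, Continuous fun t => B t ω) (ht : 0 < t)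
    (z : ℝ) :
    {ω | ∃ s ∈ Icc 0 t, z < B s ω}
      = ⋃ m : ℕ, {ω | ∃ k : ℕ, k ≤ 2 ^ m ∧ z < B (k * (t / (2 ^ m : ℕ))) ω} := by
  ext ω
  simp only [mem_ofPred_eq, mem_iUnion, exists_Icc_lt_iff_exists_dyadic (hB ω) ht]

variable [MeasurableSpace Ω] {P : Measure Ω}

namespace IsStdBM

variable (hB : IsStdBM P B)
include hB

lemma isProbabilityMeasure : IsProbabilityMeasure P := hB.1

lemma measurable (t : ℝ) : Measurable (B t) := hB.2.1 t

lemma zero (ω : Ω) : B 0 ω = 0 := hB.2.2.1 ω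

lemma continuous (ω : Ω) : Continuous fun t => B t ω := hB.2.2.2.1 ω

lemma map_sub (hs : 0 ≤ s) (hst : s ≤ t) :
    P.map (fun ω => B t ω - B s ω) = gaussianReal 0 (t - s).toNNReal :=
  hB.2.2.2.2.1 s t hs hst

lemma iIndepFun_sub (n : ℕ) {τ : ℕ → ℝ} (hτ : StrictMono τ) (hτ0 : 0 ≤ τ 0) :
    iIndepFun (fun i : Fin n => fun ω => B (τ (i + 1)) ω - B (τ i) ω) P :=
  hB.2.2.2.2.2 n τ hτ hτ0

lemma measure_lt_sub (hs : 0 ≤ s) (hst : s < t) (x : ℝ) :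
    P {ω | x < B t ω - B s ω} = ENNReal.ofReal (stdNormalCDF (-x / √(t - s))) := by
  rw [← gaussianReal_Ioi (sub_pos.mpr hst), ← hB.map_sub hs hst.le,
    Measure.map_apply (f := fun ω => B t ω - B s ω) ((hB.measurable t).sub (hB.measurable s))
      measurableSet_Ioi]
  rfl

lemma measure_lt (ht : 0 < t) (x : ℝ) :
    P {ω | x < B t ω} = ENNReal.ofReal (stdNormalCDF (-x / √t)) := by
  simpa [hB.zero] using hB.measure_lt_sub le_rfl ht x

lemma measure_lt_sub_le (hs : 0 ≤ s) (hst : s ≤ t) {δ : ℝ} (hδ : 0 ≤ δ) :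
    P {ω | δ < B t ω - B s ω} ≤ ENNReal.ofReal (exp (-δ ^ 2 / (2 * (t - s)))) := by
  have hX : Measurable fun ω => B t ω - B s ω := (hB.measurable t).sub (hB.measurable s)
  have hG := (hasSubgaussianMGF_id_gaussianReal (t - s).toNNReal).measure_ge_le hδ
  rw [Real.coe_toNNReal _ (sub_nonneg.mpr hst)] at hG
  calc P {ω | δ < B t ω - B s ω} ≤ P {ω | δ ≤ B t ω - B s ω} :=
        measure_mono fun ω (h : δ < _) => show δ ≤ _ from h.le
    _ = gaussianReal 0 (t - s).toNNReal (Ici δ) := by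
        rw [← hB.map_sub hs hst, Measure.map_apply hX measurableSet_Ici]
        rfl
    _ ≤ ENNReal.ofReal (exp (-δ ^ 2 / (2 * (t - s)))) := by
        rw [← ofReal_measureReal]
        exact ENNReal.ofReal_le_ofReal hG

lemma isSymmetricWalk {c : ℝ} (hc : 0 < c) (n : ℕ) :
    IsSymmetricWalk (fun k ω => B (k * c) ω) n P where
  measurable k := hB.measurable _
  zero ω := by simp [hB.zero]
  iIndepFun_increments :=
    hB.iIndepFun_sub n ((strictMono_mul_right_of_pos hc).comp Nat.strictMono_cast) (by simp)
  map_neg_sub k hk := by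
    have hX : Measurable fun ω => B (n * c) ω - B (k * c) ω :=
      (hB.measurable _).sub (hB.measurable _)
    change P.map (Neg.neg ∘ fun ω => B (n * c) ω - B (k * c) ω) = _
    rw [← Measure.map_map measurable_neg hX, hB.map_sub (by positivity) (by gcongr),
      gaussianReal_map_neg_zero]

lemma measure_exists_grid_le (ht : 0 < t) (hz : 0 ≤ z) {N : ℕ} (hN : N ≠ 0) :
    P {ω | ∃ k : ℕ, k ≤ N ∧ z < B (k * (t / N)) ω}
      ≤ ENNReal.ofReal (2 * stdNormalCDF (-z / √t)) := by
  have hNt : (N : ℝ) * (t / N) = t := by field_simp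
  have h := (hB.isSymmetricWalk (c := t / N) (by positivity) N).measure_exists_lt_le hz
  simp only [hNt] at h
  rwa [ENNReal.ofReal_mul zero_le_two, ENNReal.ofReal_ofNat, ← hB.measure_lt ht]

lemma le_measure_exists_grid_add (ht : 0 < t) (hz : 0 ≤ z) {δ : ℝ} (hδ : 0 ≤ δ) {N : ℕ}
    (hN : N ≠ 0) :
    ENNReal.ofReal (2 * stdNormalCDF (-(z + 2 * δ) / √t))
      ≤ P {ω | ∃ k : ℕ, k ≤ N ∧ z < B (k * (t / N)) ω}
        + ENNReal.ofReal (N * exp (-(δ ^ 2 / (2 * t)) * N)) := by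
  have hNt : (N : ℝ) * (t / N) = t := by field_simp
  have h := (hB.isSymmetricWalk (c := t / N) (by positivity) N).measure_lt_add_measure_lt_le hz hδ
  simp only [hNt] at h
  have hstep (k : ℕ) : P {ω | δ < B ((k + 1 : ℕ) * (t / N)) ω - B (k * (t / N)) ω}
      ≤ ENNReal.ofReal (exp (-(δ ^ 2 / (2 * t)) * N)) := by
    convert hB.measure_lt_sub_le (s := k * (t / N)) (t := (k + 1 : ℕ) * (t / N)) (by positivity)
      (by gcongr; simp) hδ using 4
    push_cast
    field_simp
    ring
  calc ENNReal.ofReal (2 * stdNormalCDF (-(z + 2 * δ) / √t))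
      = P {ω | z + 2 * δ < B t ω} + P {ω | z + 2 * δ < B t ω} := by
        rw [hB.measure_lt ht, ← two_mul, ENNReal.ofReal_mul zero_le_two, ENNReal.ofReal_ofNat]
    _ ≤ P {ω | z < B t ω} + P {ω | z + 2 * δ < B t ω} := by
        gcongr
        linarith
    _ ≤ _ := h
    _ ≤ P {ω | ∃ k : ℕ, k ≤ N ∧ z < B (k * (t / N)) ω}
        + ∑ k ∈ Finset.range N, ENNReal.ofReal (exp (-(δ ^ 2 / (2 * t)) * N)) := by
        gcongr with k
        exact hstep k
    _ = _ := by
        rw [Finset.sum_const, Finset.card_range, nsmul_eq_mul, ENNReal.ofReal_mul (by positivity),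
          ENNReal.ofReal_natCast]

lemma measurableSet_exists_Icc_lt (ht : 0 < t) (z : ℝ) :
    MeasurableSet {ω | ∃ s ∈ Icc 0 t, z < B s ω} := by
  rw [setOf_exists_Icc_lt_eq_iUnion hB.continuous ht]
  exact .iUnion fun m => measurableSet_setOfPred.mpr <| Measurable.exists fun k =>
    measurable_const.and <| measurableSet_setOfPred.mp <|
      measurableSet_lt measurable_const (hB.measurable _)

lemma measure_exists_Icc_lt_le (ht : 0 < t) (hz : 0 ≤ z) :
    P {ω | ∃ s ∈ Icc 0 t, z < B s ω} ≤ ENNReal.ofReal (2 * stdNormalCDF (-z / √t)) := by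
  rw [setOf_exists_Icc_lt_eq_iUnion hB.continuous ht]
  exact le_of_tendsto' (tendsto_measure_iUnion_atTop monotone_setOf_exists_dyadic)
    fun m => hB.measure_exists_grid_le ht hz (by positivity)

lemma le_measure_exists_Icc_lt (ht : 0 < t) (hz : 0 ≤ z) {w : ℝ} (hzw : z < w) :
    ENNReal.ofReal (2 * stdNormalCDF (-w / √t)) ≤ P {ω | ∃ s ∈ Icc 0 t, z < B s ω} := by
  set δ := (w - z) / 2
  have hw : w = z + 2 * δ := by ring
  have htail : Tendsto (fun N : ℕ => ENNReal.ofReal (N * exp (-(δ ^ 2 / (2 * t)) * N)))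
      atTop (𝓝 0) := by
    have := (tendsto_rpow_mul_exp_neg_mul_atTop_nhds_zero 1 _
      (by positivity : 0 < δ ^ 2 / (2 * t))).comp tendsto_natCast_atTop_atTop
    simpa using ENNReal.tendsto_ofReal this
  have hlim := (tendsto_const_nhds (x := P {ω | ∃ s ∈ Icc 0 t, z < B s ω})).add htail
  rw [add_zero] at hlim
  refine ge_of_tendsto hlim ?_
  filter_upwards [eventually_ne_atTop 0] with N hN
  rw [hw]
  refine (hB.le_measure_exists_grid_add ht hz (by positivity) hN).trans
    (add_le_add_left (measure_mono ?_) _)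
  rintro ω ⟨k, hk, h⟩
  exact ⟨_, natCast_mul_div_mem_Icc hk ht.le, h⟩

end IsStdBM

end BrownianMotion

namespace IsStdBM

variable {Ω : Type*} [MeasurableSpace Ω] {P : Measure Ω} {B : ℝ → Ω → ℝ} {y : ℝ}

lemma measure_forall_ne (hB : IsStdBM P B) (hy : 0 < y) :
    P {ω | ∀ s, 0 ≤ s → B s ω ≠ y} = 0 := by
  have := hB.isProbabilityMeasure
  have hle (u : ℝ) (hu : 0 < u) :
      P {ω | ∀ s, 0 ≤ s → B s ω ≠ y}
        ≤ 1 - ENNReal.ofReal (2 * stdNormalCDF (-(y + 1) / √u)) := by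
    calc P {ω | ∀ s, 0 ≤ s → B s ω ≠ y}
        ≤ P {ω | ∃ s ∈ Icc 0 u, y < B s ω}ᶜ := by
          refine measure_mono fun ω hω ⟨s, hs, hys⟩ => ?_
          obtain ⟨r, hr, hry⟩ := intermediate_value_Icc hs.1 (hB.continuous ω).continuousOn
            ⟨(hB.zero ω).symm ▸ hy.le, hys.le⟩
          exact hω r hr.1 hry
      _ = 1 - P {ω | ∃ s ∈ Icc 0 u, y < B s ω} :=
          prob_compl_eq_one_sub (hB.measurableSet_exists_Icc_lt hu y)
      _ ≤ 1 - ENNReal.ofReal (2 * stdNormalCDF (-(y + 1) / √u)) :=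
          tsub_le_tsub_left (hB.le_measure_exists_Icc_lt hu hy.le (lt_add_one y)) 1
  have hlim : Tendsto (fun u => 1 - ENNReal.ofReal (2 * stdNormalCDF (-(y + 1) / √u)))
      atTop (𝓝 0) := by
    have harg : Tendsto (fun u => -(y + 1) / √u) atTop (𝓝 0) :=
      tendsto_const_nhds.div_atTop tendsto_sqrt_atTop
    have hΦ : Continuous fun x => ENNReal.ofReal (2 * stdNormalCDF x) :=
      ENNReal.continuous_ofReal.comp (by fun_prop)
    have hlim := (hΦ.tendsto 0).comp harg
    simpa [stdNormalCDF_zero] using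
      ENNReal.Tendsto.sub tendsto_const_nhds hlim (.inl ENNReal.one_ne_top)
  exact le_antisymm (ge_of_tendsto hlim ((eventually_gt_atTop 0).mono hle)) zero_le

end IsStdBM

section HitTime

variable {Ω : Type*} {B : ℝ → Ω → ℝ} {y t : ℝ} {ω : Ω}

lemma hitTime_le_of_exists_lt (hc : Continuous fun s => B s ω) (h0 : B 0 ω = 0) (hy : 0 ≤ y)
    (h : ∃ s ∈ Icc 0 t, y < B s ω) : hitTime B y ω ≤ t := by
  obtain ⟨s, hs, hys⟩ := h
  obtain ⟨r, hr, hry⟩ := intermediate_value_Icc hs.1 hc.continuousOn ⟨h0.symm ▸ hy, hys.le⟩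
  have hbdd : BddBelow {s : ℝ | 0 ≤ s ∧ B s ω = y} := ⟨0, fun _ hu => hu.1⟩
  exact ((csInf_le hbdd ⟨hr.1, hry⟩).trans hr.2).trans hs.2

lemma exists_eq_of_hitTime_le (hc : Continuous fun s => B s ω) (hne : ∃ s, 0 ≤ s ∧ B s ω = y)
    (h : hitTime B y ω ≤ t) : ∃ s ∈ Icc 0 t, B s ω = y := by
  have hclosed : IsClosed {s : ℝ | 0 ≤ s ∧ B s ω = y} :=
    isClosed_Ici.inter (isClosed_singleton.preimage hc)
  have hmem := hclosed.csInf_mem hne ⟨0, fun _ hu => hu.1⟩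
  exact ⟨hitTime B y ω, ⟨hmem.1, h⟩, hmem.2⟩

end HitTime

theorem hitting_time_cdf {Ω : Type*} [MeasurableSpace Ω] (P : Measure Ω) (B : ℝ → Ω → ℝ)
    (hB : IsStdBM P B) (y : ℝ) (hy : 0 < y) :
    ∀ t : ℝ, 0 < t →
      P {ω | hitTime B y ω ≤ t} = ENNReal.ofReal (2 * stdNormalCDF (-y / Real.sqrt t)) := by
  intro t ht
  set F : ℝ → ℝ≥0∞ := fun x => ENNReal.ofReal (2 * stdNormalCDF (-x / √t))
  have hF : Continuous F := ENNReal.continuous_ofReal.comp (by fun_prop)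
  have hlower (w : ℝ) (hw : y < w) : F w ≤ P {ω | hitTime B y ω ≤ t} :=
    (hB.le_measure_exists_Icc_lt ht hy.le hw).trans <| measure_mono fun ω hω =>
      hitTime_le_of_exists_lt (hB.continuous ω) (hB.zero ω) hy.le hω
  have hupper (z : ℝ) (hz : z ∈ Ioo 0 y) : P {ω | hitTime B y ω ≤ t} ≤ F z := by
    -- On paths that never reach `y`, `hitTime B y ω = sInf ∅ = 0`.
    have hsub : {ω | hitTime B y ω ≤ t}
        ⊆ {ω | ∃ s ∈ Icc 0 t, z < B s ω} ∪ {ω | ∀ s, 0 ≤ s → B s ω ≠ y} := by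
      intro ω (hω : hitTime B y ω ≤ t)
      by_cases hne : ∃ s, 0 ≤ s ∧ B s ω = y
      · obtain ⟨s, hs, hsy⟩ := exists_eq_of_hitTime_le (hB.continuous ω) hne hω
        exact .inl ⟨s, hs, hsy ▸ hz.2⟩
      · simp only [not_exists, not_and] at hne
        exact .inr hne
    calc P {ω | hitTime B y ω ≤ t}
        ≤ P {ω | ∃ s ∈ Icc 0 t, z < B s ω} + P {ω | ∀ s, 0 ≤ s → B s ω ≠ y} :=
          (measure_mono hsub).trans (measure_union_le _ _)
      _ ≤ F z := by
          rw [hB.measure_forall_ne hy, add_zero]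
          exact hB.measure_exists_Icc_lt_le ht hz.1.le
  have hFy := hF.tendsto y
  refine le_antisymm (ge_of_tendsto (hFy.mono_left (nhdsWithin_le_nhds (s := Iio y))) ?_)
    (le_of_tendsto (hFy.mono_left (nhdsWithin_le_nhds (s := Ioi y))) ?_)
  · filter_upwards [Ioo_mem_nhdsLT hy] with z hz using hupper z hz
  · filter_upwards [self_mem_nhdsWithin] with w hw using hlower w hw
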